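/- arXiv:2208.09509 — 5 statements merged into one kernel-verified Lean document; each statement's English description precedes it below -/
import Mathlib

section
/- An extended matrix M ∈ matr∗(n,m,k) is functional in every pointed set if and only if it is functional in some pointed set having at least two elements. -/
/-!
If `M` is functional in `(Z, ptZ)`, composing pointed assignments into any pointed set `Y`
with a pointed map `φ : Y → Z` shows that their values on the right entries have equal
images under `φ`. When `Z` has a point `z ≠ ptZ`, any two distinct values in `Y` are
separated by such a `φ`: the indicator that sends one of them, chosen different from `pt`,
to `z`, and everything else to `ptZ`.
-/

/-- `M ∈ matr∗(n,m,k)` is modelled by its left part `L : Fin n → Fin m → Option (Fin k)`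
and its right column `r : Fin n → Option (Fin k)`, where `none` is the constant `∗` and
`some v` is the variable `x_{v+1}`.  `M` is functional in the pointed set `(Y, pt)` if for
all row indices `i, i'` and pointed functions `f, f'` agreeing row-wise on the left entries,
the values on the right entries agree. -/
def IsFunctional {n m k : ℕ} (L : Fin n → Fin m → Option (Fin k))
    (r : Fin n → Option (Fin k)) (Y : Type) (pt : Y) : Prop :=
  ∀ (i i' : Fin n) (f f' : Option (Fin k) → Y), f none = pt → f' none = pt →
    (∀ j : Fin m, f (L i j) = f' (L i' j)) → f (r i) = f' (r i')

lemma IsFunctional.map_eq {n m k : ℕ} {L : Fin n → Fin m → Option (Fin k)}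
    {r : Fin n → Option (Fin k)} {Z : Type} {ptZ : Z} (h : IsFunctional L r Z ptZ)
    {Y : Type} {pt : Y} {φ : Y → Z} (hφ : φ pt = ptZ) {i i' : Fin n}
    {f f' : Option (Fin k) → Y} (hf : f none = pt) (hf' : f' none = pt)
    (hagree : ∀ j, f (L i j) = f' (L i' j)) : φ (f (r i)) = φ (f' (r i')) :=
  h i i' (φ ∘ f) (φ ∘ f') (by simp [hf, hφ]) (by simp [hf', hφ])
    fun j => congrArg φ (hagree j)

lemma exists_pointed_map_ne_of_ne {Y Z : Type} {pt a b : Y} {ptZ z : Z} (hz : z ≠ ptZ)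
    (hab : a ≠ b) : ∃ φ : Y → Z, φ pt = ptZ ∧ φ a ≠ φ b := by
  classical
  by_cases ha : a = pt
  · subst ha
    exact ⟨fun y => if y = b then z else ptZ, by simp [hab], by simp [hab, hz.symm]⟩
  · exact ⟨fun y => if y = a then z else ptZ, by simp [Ne.symm ha], by simp [hab.symm, hz]⟩

/-- `M` is functional in every pointed set iff it is functional in some
pointed set having at least two elements. -/
theorem stmt_1 {n m k : ℕ} (L : Fin n → Fin m → Option (Fin k))
    (r : Fin n → Option (Fin k)) :
    (∀ (Y : Type) (pt : Y), IsFunctional L r Y pt) ↔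
      (∃ (Y : Type) (pt : Y), (∃ y : Y, y ≠ pt) ∧ IsFunctional L r Y pt) := by
  refine ⟨fun h => ⟨Bool, false, ⟨true, by decide⟩, h Bool false⟩, ?_⟩
  rintro ⟨Z, ptZ, ⟨z, hz⟩, hfun⟩ Y pt i i' f f' hf hf' hagree
  by_contra hne
  obtain ⟨φ, hφ, hsep⟩ := exists_pointed_map_ne_of_ne (pt := pt) hz hne
  exact hsep (hfun.map_eq hφ hf hf' hagree)
end

section
/- If an extended matrix M ∈ matr∗(n,m,k) is functional in a two-element pointed set, then every row of M whose right entry is a variable x (i.e., not ∗) contains x among its left entries. -/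
theorem stmt_2_general {n m k : ℕ} (L : Fin n → Fin m → Option (Fin k))
    (r : Fin n → Option (Fin k))
    (Y : Type) (pt y : Y) (hy : y ≠ pt)
    (hfun : IsFunctional L r Y pt) :
    ∀ (i : Fin n) (x : Fin k), r i = some x → ∃ j : Fin m, L i j = some x := by
  intro i x hx
  by_contra! hL
  -- If `x` is absent from the left of row `i`, the valuation sending only `x` to `y` agrees there
  -- with the constant valuation `pt`, yet the two differ on the right entry `x`.
  have hright := hfun i i (fun z => if z = some x then y else pt) (fun _ => pt)
    (if_neg (Option.some_ne_none x).symm) rfl (fun j => if_neg (hL j))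
  rw [hx, if_pos rfl] at hright
  exact hy hright

/-- if `M` is functional in a two-element pointed set, then every row of `M`
whose right entry is a variable `x` contains `x` among its left entries. -/
theorem stmt_2 {n m k : ℕ} (L : Fin n → Fin m → Option (Fin k))
    (r : Fin n → Option (Fin k))
    (Y : Type) (pt y : Y) (hy : y ≠ pt) (htwo : ∀ z : Y, z = pt ∨ z = y)
    (hfun : IsFunctional L r Y pt) :
    ∀ (i : Fin n) (x : Fin k), r i = some x → ∃ j : Fin m, L i j = some x :=
  stmt_2_general L r Y pt y hy hfun
end

section
/- If M ∈ matr∗(n,m,k) and for some row i the left entries of the i-th row of M consist of m pairwise distinct variables (no ∗ and no repetitions among x₁,...,x_k), and the right entry of that row is a variable not among the left entries of that row, then M is not functional in any pointed set with at least two elements. -/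
theorem not_isFunctional_of_row {n m k : ℕ} {L : Fin n → Fin m → Option (Fin k)}
    {r : Fin n → Option (Fin k)} {Y : Type} {pt : Y} (i : Fin n) (f : Option (Fin k) → Y)
    (hf : f none = pt) (hleft : ∀ j, f (L i j) = pt) (hright : f (r i) ≠ pt) :
    ¬ IsFunctional L r Y pt :=
  fun hfun => hright (hfun i i f (fun _ => pt) hf rfl hleft)

theorem stmt_3_general {n m k : ℕ} (L : Fin n → Fin m → Option (Fin k))
    (r : Fin n → Option (Fin k)) (i : Fin n) (v : Fin m → Fin k)
    (hleft : ∀ j : Fin m, L i j = some (v j))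
    (x : Fin k) (hright : r i = some x) (hnot : ∀ j : Fin m, v j ≠ x) :
    ∀ (Y : Type) (pt : Y), (∃ y : Y, y ≠ pt) → ¬ IsFunctional L r Y pt := by
  rintro Y pt ⟨y, hy⟩
  refine not_isFunctional_of_row i (Function.update (fun _ => pt) (some x) y)
    (Function.update_of_ne (Option.some_ne_none x).symm _ _) (fun j => ?_) ?_
  · rw [hleft j, Function.update_of_ne (by simpa using hnot j)]
  · rwa [hright, Function.update_self]

/-- if some row `i` of `M` has left entries consisting of `m` pairwise
distinct variables (no `∗`, no repetitions) and its right entry is a variable not among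
its left entries, then `M` is not functional in any pointed set with at least two
elements. -/
theorem stmt_3 {n m k : ℕ} (L : Fin n → Fin m → Option (Fin k))
    (r : Fin n → Option (Fin k)) (i : Fin n) (v : Fin m → Fin k)
    (hleft : ∀ j : Fin m, L i j = some (v j)) (hinj : Function.Injective v)
    (x : Fin k) (hright : r i = some x) (hnot : ∀ j : Fin m, v j ≠ x) :
    ∀ (Y : Type) (pt : Y), (∃ y : Y, y ≠ pt) → ¬ IsFunctional L r Y pt :=
  stmt_3_general L r i v hleft x hright hnot
end

section
/- Let M ∈ matr∗(n,m,k) and let (Y,∗) be a pointed set. If whenever row indices i, i' and a column index j satisfy the relation j (R_{M_i} ∨ R_{M_{i'}} ∨ R*_{M_{i,i'}}) j' then any pair of pointed functions f_i, f_{i'} : {∗,x₁,...,x_k} → Y agreeing on left columns (f_i(M_{i,ℓ}) = f_{i'}(M_{i',ℓ}) for all ℓ ≤ m) satisfies f_i(M_{i,j}) = f_i(M_{i,j'}) = f_{i'}(M_{i',j}) = f_{i'}(M_{i',j'}). -/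
/-! Along every generating step of the join, `ℓ ↦ f (M_{i,ℓ})` takes equal values: for `R_{M_i}`
trivially, for `R_{M_{i'}}` after transporting through the agreement `f (M_{i,ℓ}) = f' (M_{i',ℓ})`,
and for `R*` because a column with a `∗` in row `i` or `i'` is sent to the base point by both
pointed maps. A function constant along the generating steps is constant on classes of the
generated equivalence relation, and agreement then transfers the equalities to `f'`. -/

theorem Relation.EqvGen.apply_eq_of_forall_rel {α Y : Type*} {r : α → α → Prop} {g : α → Y}
    (hg : ∀ a b, r a b → g a = g b) {a b : α} (hab : Relation.EqvGen r a b) : g a = g b :=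
  (Equivalence.eqvGen_iff (Setoid.ker g).iseqv).mp
    (Relation.EqvGen.mono hg a b hab)

section PointedPair

variable {α β Y : Type*} {u u' : α → Option β} {f f' : Option β → Y} {pt : Y}

theorem apply_eq_of_eq_none_or_eq_none (hf : f none = pt) (hf' : f' none = pt)
    (hagree : ∀ ℓ, f (u ℓ) = f' (u' ℓ)) {a : α} (ha : u a = none ∨ u' a = none) :
    f (u a) = pt := by
  rcases ha with ha | ha
  · rw [ha, hf]
  · rw [hagree a, ha, hf']

theorem apply_eq_apply_of_eqvGen_join (hf : f none = pt) (hf' : f' none = pt)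
    (hagree : ∀ ℓ, f (u ℓ) = f' (u' ℓ)) {a b : α}
    (hab : Relation.EqvGen (fun a b => u a = u b ∨ u' a = u' b ∨
      (a = b ∨ ((u a = none ∨ u' a = none) ∧ (u b = none ∨ u' b = none)))) a b) :
    f (u a) = f (u b) := by
  refine hab.apply_eq_of_forall_rel (g := fun c => f (u c)) fun c d hcd => ?_
  rcases hcd with h | h | rfl | ⟨hc, hd⟩
  · rw [h]
  · rw [hagree c, h, hagree d]
  · rfl
  · rw [apply_eq_of_eq_none_or_eq_none hf hf' hagree hc,
      apply_eq_of_eq_none_or_eq_none hf hf' hagree hd]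

end PointedPair

/-- Let `M` have left part `L` and entries in `Option (Fin k)` (`none = ∗`).
For rows `i, i'`, the join `R_{M_i} ∨ R_{M_{i'}} ∨ R*_{M_{i,i'}}` of the three equivalence
relations on the left-column indices is the equivalence relation generated by their union.
If `j` and `j'` are related by this join, then any pair of pointed functions
`f, f' : {∗,x₁,…,x_k} → Y` agreeing on all left columns of rows `i` and `i'` satisfies
`f(M_{i,j}) = f(M_{i,j'}) = f'(M_{i',j}) = f'(M_{i',j'})`. -/
theorem stmt_4 {n m k : ℕ} (L : Fin n → Fin m → Option (Fin k))
    (i i' : Fin n) (j j' : Fin m)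
    (hjoin : Relation.EqvGen
      (fun a b : Fin m =>
        (L i a = L i b) ∨ (L i' a = L i' b) ∨
          (a = b ∨ ((L i a = none ∨ L i' a = none) ∧ (L i b = none ∨ L i' b = none))))
      j j')
    (Y : Type) (pt : Y) (f f' : Option (Fin k) → Y)
    (hf : f none = pt) (hf' : f' none = pt)
    (hagree : ∀ ℓ : Fin m, f (L i ℓ) = f' (L i' ℓ)) :
    f (L i j) = f (L i j') ∧ f (L i j') = f' (L i' j) ∧ f' (L i' j) = f' (L i' j') := by
  have hrow : f (L i j) = f (L i j') := apply_eq_apply_of_eqvGen_join hf hf' hagree hjoin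
  refine ⟨hrow, ?_, ?_⟩
  · rw [← hrow, hagree j]
  · rw [← hagree j, hrow, hagree j']
end

section
/- The category of pointed sets Set∗ has M-closed relations for an extended matrix M ∈ matr∗(n,m,k) if and only if either all entries of the right column of M are ∗, or the right column of M equals one of its left columns. -/
/-- An `n`-ary pointed relation `R` on a pointed set `(A, pt)` is `M`-closed (for the
matrix with left part `L` and right column `r`, entries in `Option (Fin k)` where
`none = ∗`) when for every pointed function `f`, if all interpreted left columns lie in
`R` then so does the interpreted right column. -/
def MClosed {n m k : ℕ} (A : Type) (pt : A) (L : Fin n → Fin m → Option (Fin k))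
    (r : Fin n → Option (Fin k)) (R : Set (Fin n → A)) : Prop :=
  ∀ f : Option (Fin k) → A, f none = pt →
    (∀ j : Fin m, (fun i => f (L i j)) ∈ R) → (fun i => f (r i)) ∈ R

/-! The relation generated by the left columns of `M` and the all-`∗` tuple, on the pointed
set of entries itself, is the universal test: interpreting `M` by the identity shows that
the right column must be one of its generators. -/

namespace MClosed

variable {n m k : ℕ} {A : Type} {pt : A} {L : Fin n → Fin m → Option (Fin k)}
  {r : Fin n → Option (Fin k)} {R : Set (Fin n → A)}

theorem of_right_column_eq_none (hr : ∀ i, r i = none) (hR : (fun _ => pt) ∈ R) :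
    MClosed A pt L r R := by
  intro f hf _
  simpa only [hr, hf] using hR

theorem of_left_column_eq (j : Fin m) (hj : ∀ i, L i j = r i) : MClosed A pt L r R := by
  intro f _ hL
  simpa only [hj] using hL j

def leftColumnRelation (L : Fin n → Fin m → Option (Fin k)) : Set (Fin n → Option (Fin k)) :=
  insert (fun _ => none) (Set.range fun j i => L i j)

theorem right_column_mem_leftColumnRelation
    (h : MClosed (Option (Fin k)) none L r (leftColumnRelation L)) :
    r ∈ leftColumnRelation L :=
  h id rfl fun j => Or.inr ⟨j, rfl⟩

end MClosed

/-- `Set∗` has `M`-closed relations (every pointed relation on every pointed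
set is `M`-closed) iff all entries of the right column of `M` are `∗`, or the right
column of `M` equals one of its left columns. -/
theorem stmt_5 {n m k : ℕ} (L : Fin n → Fin m → Option (Fin k))
    (r : Fin n → Option (Fin k)) :
    (∀ (A : Type) (pt : A) (R : Set (Fin n → A)),
        (fun _ => pt) ∈ R → MClosed A pt L r R) ↔
      ((∀ i, r i = none) ∨ (∃ j : Fin m, ∀ i, L i j = r i)) := by
  constructor
  · intro h
    rcases MClosed.right_column_mem_leftColumnRelation (h _ none _ (Set.mem_insert _ _)) with
      hnone | ⟨j, hcol⟩
    · exact Or.inl (congrFun hnone)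
    · exact Or.inr ⟨j, congrFun hcol⟩
  · rintro (hr | ⟨j, hj⟩) A pt R hR
    · exact MClosed.of_right_column_eq_none hr hR
    · exact MClosed.of_left_column_eq j hj
end
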